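/- arXiv:2104.04244 — 2 statements merged into one kernel-verified Lean document; each statement's English description precedes it below -/
import Mathlib

section
/- Proposition B.1 (eigenvalue lower bound for kernels satisfying (A.1)–(A.3)). Assume the kernel k, or its restriction to the unit sphere, satisfies Assumptions (A.1)–(A.3), the data follow the covariance or sphere model in the high-dimensional regime tr(Σ_{d(n)})/n^β → c > 0, the bandwidth is τ = tr(Σ_d), and set m = ⌊2/β⌋. Then g(1,1,1) − Σ_{i=0}^{m} g_i(1,1) > 0, and for every γ > 0 and every fixed ε > 0 there exists N such that for all n ≥ N and every sample x_1,…,x_n ∈ ℝ^{d(n)} satisfying max_{i,j≤n} |x_iᵀx_j/tr(Σ_d) − δ_{ij}| ≤ n^{−β/2}(log n)^{(1+ε)/2} (the event E_X), the minimum eigenvalue of the kernel matrix K satisfies λ_min(K) ≥ g(1,1,1) − Σ_{i=0}^{m} g_i(1,1) − γ. -/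
/-!
Split the kernel matrix as `K = P + R`, where
`P = ∑_{k ≤ m} (g_k(‖xᵢ‖²/τ, ‖xⱼ‖²/τ))ᵢⱼ ⊙ (xᵢᵀxⱼ/τ)^{⊙k}` is positive semidefinite by the
Schur product theorem. On the event `E_X` the diagonal entries of `R` are
`g(u,u,u) - ∑_{k ≤ m} g_k(u,u) uᵏ` with `u` close to `1`, hence close to
`g(1,1,1) - ∑_{k ≤ m} g_k(1,1)`, which is positive because `g_J(1,1) > 0` for some `J > m`.
Off the diagonal, `|g_k(a,b)| ≤ (g_k(a,a) + g_k(b,b))/2` bounds the tail of the series by a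
constant times `ρ^(m+1)`, `ρ = n^(-β/2) (log n)^((1+ε)/2)`, so a Gershgorin-type estimate loses
at most a constant times `n ρ^(m+1)`, which tends to `0` because `(m+1) β/2 > 1`.
-/

open MeasureTheory ProbabilityTheory Filter Matrix
open scoped Topology NNReal ENNReal

noncomputable section
/-- The square root of a positive semidefinite matrix, as `Matrix.PosSemidef.sqrt` was defined
in Mathlib (December 2024). -/
def Matrix.PosSemidef.sqrt {n : Type*} [Fintype n] [DecidableEq n] {A : Matrix n n ℝ}
    (hA : A.PosSemidef) : Matrix n n ℝ :=
  hA.1.eigenvectorUnitary.1 * diagonal ((↑) ∘ (·.sqrt) ∘ hA.1.eigenvalues) *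
    (star hA.1.eigenvectorUnitary : Matrix n n ℝ)
def dotp {d : ℕ} (x y : Fin d → ℝ) : ℝ := ∑ i, x i * y i
def sqnorm {d : ℕ} (x : Fin d → ℝ) : ℝ := dotp x x
def IsCoordDist (ν : Measure ℝ) : Prop :=
  ν = gaussianReal 0 1 ∨
    (IsProbabilityMeasure ν ∧ (∃ C : ℝ, ∀ᵐ x ∂ν, |x| ≤ C) ∧
      (∫ x, x ∂ν) = 0 ∧ (∫ x, x ^ 2 ∂ν) = 1)
def IsCovarianceModel {d : ℕ} (S : Matrix (Fin d) (Fin d) ℝ) (hS : S.PosSemidef)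
    (μ : Measure (Fin d → ℝ)) : Prop :=
  ∃ ν : Measure ℝ, IsCoordDist ν ∧
    μ = (Measure.pi fun _ : Fin d => ν).map (fun w => hS.sqrt.mulVec w)
def IsSphereModel {d : ℕ} (S : Matrix (Fin d) (Fin d) ℝ) (hS : S.PosSemidef)
    (μ : Measure (Fin d → ℝ)) : Prop :=
  ∃ μZ : Measure (Fin d → ℝ), IsCovarianceModel S hS μZ ∧
    μ = μZ.map (fun z => (Real.sqrt S.trace / Real.sqrt (sqnorm z)) • z)
def OpNormOne {d : ℕ} (S : Matrix (Fin d) (Fin d) ℝ) : Prop :=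
  IsGreatest {r : ℝ | ∃ x : Fin d → ℝ, sqnorm x = 1 ∧ dotp x (S.mulVec x) = r} 1
def IsPSDKernel1 (q : ℝ → ℝ → ℝ) : Prop :=
  ∀ (N : ℕ) (u : Fin N → ℝ), (Matrix.of fun a b => q (u a) (u b)).PosSemidef
def AssumptionA1 (g : ℝ → ℝ → ℝ → ℝ) (gj : ℕ → ℝ → ℝ → ℝ) : Prop :=
  (∃ δ > (0:ℝ), ∀ u v t : ℝ, u ∈ Set.Icc (1 - δ) (1 + δ) → v ∈ Set.Icc (1 - δ) (1 + δ) →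
      |t| ≤ 1 + δ → HasSum (fun j : ℕ => gj j u v * t ^ j) (g u v t)) ∧
    ∀ j, IsPSDKernel1 (gj j)
def AssumptionA2 (g : ℝ → ℝ → ℝ → ℝ) : Prop :=
  ∃ δL > (0:ℝ), ∃ L : ℝ≥0, LipschitzOnWith L (fun u => g u u u) (Set.Icc (1 - δL) (1 + δL))
def AssumptionA3 (β : ℝ) (gj : ℕ → ℝ → ℝ → ℝ) : Prop :=
  (∀ i ≤ ⌊2 / β⌋₊, ∃ U ∈ 𝓝 ((1:ℝ), (1:ℝ)),
      ContDiffOn ℝ (⌊2 / β⌋₊ + 1 - i) (fun p : ℝ × ℝ => gj i p.1 p.2) U) ∧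
    ∃ J, ⌊2 / β⌋₊ < J ∧ 0 < gj J 1 1
def kermap {d : ℕ} (g : ℝ → ℝ → ℝ → ℝ) (τ : ℝ) (x y : Fin d → ℝ) : ℝ :=
  g (sqnorm x / τ) (sqnorm y / τ) (dotp x y / τ)
def kernelMatrix {d n : ℕ} (k : (Fin d → ℝ) → (Fin d → ℝ) → ℝ)
    (xs : Fin n → Fin d → ℝ) : Matrix (Fin n) (Fin n) ℝ :=
  Matrix.of fun i j => k (xs i) (xs j)
def ridgeEstimator {d n : ℕ} (k : (Fin d → ℝ) → (Fin d → ℝ) → ℝ) (lam : ℝ)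
    (fstar : (Fin d → ℝ) → ℝ) (xs : Fin n → Fin d → ℝ) (x : Fin d → ℝ) : ℝ :=
  dotProduct (fun i => fstar (xs i))
    (((kernelMatrix k xs + lam • (1 : Matrix (Fin n) (Fin n) ℝ))⁻¹).mulVec
      (fun i => k (xs i) x))
def biasOf {d : ℕ} (est : (Fin d → ℝ) → ℝ) (fstar : (Fin d → ℝ) → ℝ)
    (μ : Measure (Fin d → ℝ)) : ℝ :=
  ∫ x, (est x - fstar x) ^ 2 ∂μ
def polyApproxError (d m : ℕ) (f : (Fin d → ℝ) → ℝ) (μ : Measure (Fin d → ℝ)) : ℝ :=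
  ⨅ p : {p : MvPolynomial (Fin d) ℝ // p.totalDegree ≤ m},
    ∫ x, (f x - MvPolynomial.eval x (p : MvPolynomial (Fin d) ℝ)) ^ 2 ∂μ
def alphaExpG (α : ℝ) (g : ℝ → ℝ → ℝ → ℝ) : Prop :=
  ∀ u v t : ℝ, g u v t = Real.exp (-(u + v - 2 * t) ^ (α / 2))

namespace IsPSDKernel1

variable {q : ℝ → ℝ → ℝ}

theorem quadForm_nonneg (hq : IsPSDKernel1 q) {N : ℕ} (u w : Fin N → ℝ) :
    0 ≤ w ⬝ᵥ (Matrix.of fun a b => q (u a) (u b)) *ᵥ w := by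
  simpa using (hq N u).dotProduct_mulVec_nonneg w

theorem diag_nonneg (hq : IsPSDKernel1 q) (a : ℝ) : 0 ≤ q a a := by
  simpa [dotProduct, mulVec] using hq.quadForm_nonneg (N := 1) (fun _ => a) (fun _ => 1)

theorem symm (hq : IsPSDKernel1 q) (a b : ℝ) : q a b = q b a := by
  simpa using congrFun (congrFun (hq 2 ![a, b]).isHermitian.eq 1) 0

theorem abs_le_diag_avg (hq : IsPSDKernel1 q) (a b : ℝ) : |q a b| ≤ (q a a + q b b) / 2 := by
  have h₁ := hq.quadForm_nonneg ![a, b] ![1, 1]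
  have h₂ := hq.quadForm_nonneg ![a, b] ![1, -1]
  simp [dotProduct, mulVec, Fin.sum_univ_two, hq.symm b a] at h₁ h₂
  rw [abs_le]; constructor <;> linarith

end IsPSDKernel1

theorem Matrix.PosSemidef.entrywise_pow {ι : Type*} [Fintype ι] {A : Matrix ι ι ℝ}
    (hA : A.PosSemidef) (k : ℕ) : (Matrix.of fun i j => A i j ^ k).PosSemidef := by
  induction k with
  | zero => simpa [vecMulVec] using posSemidef_vecMulVec_self_star (fun _ : ι => (1 : ℝ))
  | succ k ih =>
    have h : (Matrix.of fun i j => A i j ^ k) ⊙ A = Matrix.of fun i j => A i j ^ (k + 1) := by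
      ext i j; simp [pow_succ]
    exact h ▸ ih.hadamard hA

theorem posSemidef_gram_div {n d : ℕ} (xs : Fin n → Fin d → ℝ) {τ : ℝ} (hτ : 0 ≤ τ) :
    (Matrix.of fun i j => dotp (xs i) (xs j) / τ).PosSemidef := by
  convert (posSemidef_self_mul_conjTranspose (Matrix.of xs)).smul (inv_nonneg.2 hτ) using 1
  ext i j; simp [dotp, mul_apply, div_eq_inv_mul]

def truncatedKernelMatrix {n d : ℕ} (gj : ℕ → ℝ → ℝ → ℝ) (m : ℕ) (τ : ℝ)
    (xs : Fin n → Fin d → ℝ) : Matrix (Fin n) (Fin n) ℝ :=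
  Matrix.of fun i j => ∑ k ∈ Finset.range m,
    gj k (sqnorm (xs i) / τ) (sqnorm (xs j) / τ) * (dotp (xs i) (xs j) / τ) ^ k

theorem posSemidef_truncatedKernelMatrix {n d : ℕ} {gj : ℕ → ℝ → ℝ → ℝ}
    (hpsd : ∀ k, IsPSDKernel1 (gj k)) (m : ℕ) {τ : ℝ} (hτ : 0 ≤ τ) (xs : Fin n → Fin d → ℝ) :
    (truncatedKernelMatrix gj m τ xs).PosSemidef := by
  have h : truncatedKernelMatrix gj m τ xs = ∑ k ∈ Finset.range m,
      (Matrix.of fun i j => gj k (sqnorm (xs i) / τ) (sqnorm (xs j) / τ)) ⊙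
        Matrix.of fun i j => (dotp (xs i) (xs j) / τ) ^ k := by
    ext i j; simp [truncatedKernelMatrix, Matrix.sum_apply]
  exact h ▸ posSemidef_sum _ fun k _ =>
    (hpsd k n _).hadamard ((posSemidef_gram_div xs hτ).entrywise_pow k)

theorem Matrix.sum_sq_mul_le_quadForm {ι : Type*} [Fintype ι] [DecidableEq ι]
    {R : Matrix ι ι ℝ} {lam e : ℝ} (hdiag : ∀ i, lam ≤ R i i)
    (hoff : ∀ i j, i ≠ j → |R i j| ≤ e) (he : 0 ≤ e) (v : ι → ℝ) :
    (lam - Fintype.card ι * e) * ∑ i, v i ^ 2 ≤ v ⬝ᵥ R *ᵥ v := by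
  have hpair : ∀ i j, (if i = j then lam * v i ^ 2 else 0) - e * (v i ^ 2 + v j ^ 2) / 2 ≤
      v i * (R i j * v j) := fun i j => by
    by_cases hij : i = j
    · subst hij
      have := mul_le_mul_of_nonneg_left (hdiag i) (sq_nonneg (v i))
      simp only [if_true]; nlinarith [sq_nonneg (v i)]
    · have h₁ : |v i * (R i j * v j)| ≤ e * (|v i| * |v j|) := by
        rw [abs_mul, abs_mul, mul_left_comm]
        exact mul_le_mul_of_nonneg_right (hoff i j hij) (by positivity)
      have h₂ : 2 * (|v i| * |v j|) ≤ v i ^ 2 + v j ^ 2 := by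
        simpa only [sq_abs, mul_assoc] using two_mul_le_add_sq |v i| |v j|
      simp only [hij, if_false]
      nlinarith [neg_abs_le (v i * (R i j * v j)), mul_le_mul_of_nonneg_left h₂ he]
  calc (lam - Fintype.card ι * e) * ∑ i, v i ^ 2
      = ∑ i, ∑ j, ((if i = j then lam * v i ^ 2 else 0) - e * (v i ^ 2 + v j ^ 2) / 2) := by
        simp only [Finset.sum_sub_distrib, Finset.sum_ite_eq, Finset.mem_univ, if_true,
          mul_add, add_div, Finset.sum_add_distrib, ← Finset.mul_sum, ← Finset.sum_div,
          Finset.sum_const, Finset.card_univ, nsmul_eq_mul]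
        ring
    _ ≤ v ⬝ᵥ R *ᵥ v := by
        simp only [dotProduct, mulVec, Finset.mul_sum]
        exact Finset.sum_le_sum fun i _ => Finset.sum_le_sum fun j _ => hpair i j

theorem sum_range_lt_of_hasSum {f : ℕ → ℝ} {a : ℝ} (hf : HasSum f a) (hf0 : ∀ k, 0 ≤ f k)
    {m J : ℕ} (hmJ : m ≤ J) (hJ : 0 < f J) : ∑ k ∈ Finset.range m, f k < a := by
  have hJm : J ∉ Finset.range m := by simpa using hmJ
  have := sum_le_hasSum (insert J (Finset.range m)) (fun k _ => hf0 k) hf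
  rw [Finset.sum_insert hJm] at this
  linarith

theorem abs_hasSum_sub_sum_range_le {c A : ℕ → ℝ} {s ρ F a : ℝ}
    (hF : HasSum (fun k => c k * s ^ k) F) (hA : HasSum A a) (hcA : ∀ k, |c k| ≤ A k)
    (hsρ : |s| ≤ ρ) (hρ : ρ ≤ 1) (m : ℕ) :
    |F - ∑ k ∈ Finset.range m, c k * s ^ k| ≤ a * ρ ^ m := by
  have hA0 : ∀ k, 0 ≤ A k := fun k => (abs_nonneg _).trans (hcA k)
  have htail := (hasSum_nat_add_iff' m).2 hF
  have hAtail := ((hasSum_nat_add_iff' m).2 hA).mul_right (ρ ^ m)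
  have hterm : ∀ k, ‖c (k + m) * s ^ (k + m)‖ ≤ A (k + m) * ρ ^ m := fun k => by
    rw [Real.norm_eq_abs, abs_mul, abs_pow]
    have hs : |s| ^ (k + m) ≤ ρ ^ m :=
      (pow_le_pow_of_le_one (abs_nonneg s) (hsρ.trans hρ) (by omega)).trans
        (pow_le_pow_left₀ (abs_nonneg s) hsρ m)
    exact mul_le_mul (hcA _) hs (by positivity) (hA0 _)
  have hAm : 0 ≤ ∑ k ∈ Finset.range m, A k := Finset.sum_nonneg fun k _ => hA0 k
  have hρm : 0 ≤ ρ ^ m := pow_nonneg ((abs_nonneg s).trans hsρ) m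
  calc |F - ∑ k ∈ Finset.range m, c k * s ^ k|
      ≤ (a - ∑ k ∈ Finset.range m, A k) * ρ ^ m := htail.norm_le_of_bounded hAtail hterm
    _ ≤ a * ρ ^ m := by gcongr; linarith

theorem quadForm_kernelMatrix_ge {n d m : ℕ} {g : ℝ → ℝ → ℝ → ℝ} {gj : ℕ → ℝ → ℝ → ℝ}
    {δ ρ lam M τ : ℝ}
    (hsum : ∀ u v t : ℝ, u ∈ Set.Icc (1 - δ) (1 + δ) → v ∈ Set.Icc (1 - δ) (1 + δ) →
      |t| ≤ 1 + δ → HasSum (fun j : ℕ => gj j u v * t ^ j) (g u v t))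
    (hpsd : ∀ k, IsPSDKernel1 (gj k)) (hρδ : ρ ≤ δ) (hρ1 : ρ < 1)
    (hgap : ∀ w, |w - 1| ≤ ρ → lam ≤ g w w w - ∑ k ∈ Finset.range m, gj k w w * w ^ k)
    (hM : ∀ w, |w - 1| ≤ ρ → g w w 1 ≤ M) (xs : Fin n → Fin d → ℝ)
    (hxs : ∀ i j, |dotp (xs i) (xs j) / τ - if i = j then (1 : ℝ) else 0| ≤ ρ) (v : Fin n → ℝ) :
    (lam - n * (M * ρ ^ m)) * ∑ i, v i ^ 2 ≤ v ⬝ᵥ kernelMatrix (kermap g τ) xs *ᵥ v := by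
  rcases isEmpty_or_nonempty (Fin n) with hn | ⟨⟨i₀⟩⟩
  · simp
  have hρ0 : 0 ≤ ρ := (abs_nonneg _).trans (hxs i₀ i₀)
  have hu : ∀ i, |sqnorm (xs i) / τ - 1| ≤ ρ := fun i =>
    (by simpa using hxs i i : |dotp (xs i) (xs i) / τ - 1| ≤ ρ)
  have ht : ∀ i j, i ≠ j → |dotp (xs i) (xs j) / τ| ≤ ρ := fun i j hij => by
    simpa [hij] using hxs i j
  -- the normalized squared norms lie near 1, which forces `τ > 0`
  have hτ : 0 < τ := by
    have h₀ : 0 < sqnorm (xs i₀) / τ := by linarith [(abs_le.1 (hu i₀)).1]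
    have h₁ : 0 ≤ sqnorm (xs i₀) :=
      show 0 ≤ ∑ l, xs i₀ l * xs i₀ l from Finset.sum_nonneg fun _ _ => mul_self_nonneg _
    by_contra! h
    linarith [div_nonpos_of_nonneg_of_nonpos h₁ h]
  have hmem : ∀ w, |w - 1| ≤ ρ → w ∈ Set.Icc (1 - δ) (1 + δ) := fun w hw => by
    constructor <;> linarith [abs_le.1 hw]
  have hdiagSum : ∀ w, |w - 1| ≤ ρ → HasSum (fun k => gj k w w) (g w w 1) := fun w hw => by
    simpa using hsum w w 1 (hmem w hw) (hmem w hw) (by rw [abs_one]; linarith)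
  have hM0 : 0 ≤ M := by
    have h := hdiagSum 1 (by simpa using hρ0)
    exact (h.nonneg fun k => (hpsd k).diag_nonneg 1).trans (hM 1 (by simpa using hρ0))
  set K := kernelMatrix (kermap g τ) xs
  set P := truncatedKernelMatrix gj m τ xs
  have hdiag : ∀ i, lam ≤ (K - P) i i := fun i => hgap _ (hu i)
  have hoff : ∀ i j, i ≠ j → |(K - P) i j| ≤ M * ρ ^ m := fun i j hij => by
    have hA := ((hdiagSum _ (hu i)).add (hdiagSum _ (hu j))).div_const 2
    refine (abs_hasSum_sub_sum_range_le (hsum _ _ _ (hmem _ (hu i)) (hmem _ (hu j)) ?_) hA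
      (fun k => (hpsd k).abs_le_diag_avg _ _) (ht i j hij) hρ1.le m).trans ?_
    · linarith [ht i j hij]
    · gcongr
      linarith [hM _ (hu i), hM _ (hu j)]
  calc (lam - n * (M * ρ ^ m)) * ∑ i, v i ^ 2
      ≤ v ⬝ᵥ (K - P) *ᵥ v := by
        simpa using Matrix.sum_sq_mul_le_quadForm hdiag hoff (by positivity) v
    _ ≤ v ⬝ᵥ (K - P) *ᵥ v + v ⬝ᵥ P *ᵥ v := by
        simpa using (posSemidef_truncatedKernelMatrix hpsd m hτ.le xs).dotProduct_mulVec_nonneg v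
    _ = v ⬝ᵥ K *ᵥ v := by rw [← dotProduct_add, ← add_mulVec, sub_add_cancel]

theorem tendsto_rpow_neg_mul_log_rpow (p : ℝ) {r : ℝ} (hr : 0 < r) :
    Tendsto (fun n : ℕ => (n : ℝ) ^ (-r) * Real.log n ^ p) atTop (𝓝 0) := by
  refine ((isLittleO_log_rpow_rpow_atTop p hr).tendsto_div_nhds_zero.comp
    tendsto_natCast_atTop_atTop).congr fun n => ?_
  simp [Real.rpow_neg (Nat.cast_nonneg n), div_eq_mul_inv, mul_comm]

theorem tendsto_natCast_mul_pow_rpow_neg_mul_log_rpow (p : ℝ) {r : ℝ} {k : ℕ} (hrk : 1 < r * k) :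
    Tendsto (fun n : ℕ => (n : ℝ) * ((n : ℝ) ^ (-r) * Real.log n ^ p) ^ k) atTop (𝓝 0) := by
  have hk : k ≠ 0 := by rintro rfl; simp at hrk; linarith
  have hk' : (0 : ℝ) < k := by positivity
  have hr : 0 < r - (k : ℝ)⁻¹ := by
    rw [sub_pos, inv_lt_iff_one_lt_mul₀ hk']; linarith
  have := (tendsto_rpow_neg_mul_log_rpow p hr).pow k
  rw [zero_pow hk] at this
  refine this.congr fun n => ?_
  have hn : (0 : ℝ) ≤ n := n.cast_nonneg
  rw [show -(r - (k : ℝ)⁻¹) = (k : ℝ)⁻¹ + -r by ring, Real.rpow_add' hn, mul_assoc, mul_pow,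
    Real.rpow_inv_natCast_pow hn hk]
  linarith

theorem continuousAt_truncationGap {g : ℝ → ℝ → ℝ → ℝ} {gj : ℕ → ℝ → ℝ → ℝ} {m : ℕ}
    (hg : Continuous fun p : ℝ × ℝ × ℝ => g p.1 p.2.1 p.2.2)
    (hgj : ∀ k < m, ContinuousAt (fun p : ℝ × ℝ => gj k p.1 p.2) (1, 1)) :
    ContinuousAt (fun w => g w w w - ∑ k ∈ Finset.range m, gj k w w * w ^ k) 1 := by
  have hg' : Continuous fun w : ℝ => g w w w :=
    hg.comp (show Continuous fun w : ℝ => (w, w, w) by fun_prop)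
  refine hg'.continuousAt.sub (tendsto_finsetSum _ fun k hk => ?_)
  have hk : ContinuousAt (fun w : ℝ => gj k w w) 1 :=
    ContinuousAt.comp (f := fun w : ℝ => (w, w)) (hgj k (Finset.mem_range.1 hk))
      (continuous_id.prodMk continuous_id).continuousAt
  exact hk.mul (continuous_pow k).continuousAt

theorem eventually_quadForm_kernelMatrix_ge {d : ℕ → ℕ} {g : ℝ → ℝ → ℝ → ℝ}
    {gj : ℕ → ℝ → ℝ → ℝ} {m : ℕ} {δ lam : ℝ} (hδ : 0 < δ)
    (hsum : ∀ u v t : ℝ, u ∈ Set.Icc (1 - δ) (1 + δ) → v ∈ Set.Icc (1 - δ) (1 + δ) →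
      |t| ≤ 1 + δ → HasSum (fun j : ℕ => gj j u v * t ^ j) (g u v t))
    (hpsd : ∀ k, IsPSDKernel1 (gj k))
    (hg : Continuous fun p : ℝ × ℝ × ℝ => g p.1 p.2.1 p.2.2)
    (hgap : ContinuousAt (fun w => g w w w - ∑ k ∈ Finset.range m, gj k w w * w ^ k) 1)
    (hlam : lam < g 1 1 1 - ∑ k ∈ Finset.range m, gj k 1 1)
    {ρ : ℕ → ℝ} (hρ : Tendsto ρ atTop (𝓝 0))
    (hnρ : Tendsto (fun n : ℕ => (n : ℝ) * ρ n ^ m) atTop (𝓝 0)) (τ : ℕ → ℝ) :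
    ∀ᶠ n in atTop, ∀ xs : Fin n → Fin (d n) → ℝ,
      (∀ i j, |dotp (xs i) (xs j) / τ n - if i = j then (1 : ℝ) else 0| ≤ ρ n) →
      ∀ v : Fin n → ℝ, lam * ∑ i, v i ^ 2 ≤ v ⬝ᵥ kernelMatrix (kermap g (τ n)) xs *ᵥ v := by
  obtain ⟨lam', hlam', hlam'gap⟩ := exists_between hlam
  obtain ⟨M, hM⟩ := exists_gt (g 1 1 1)
  obtain ⟨η, hη, hgapη⟩ := Metric.eventually_nhds_iff.1 <|
    hgap.eventually_const_lt (by simpa using hlam'gap)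
  obtain ⟨η', hη', hMη'⟩ := Metric.eventually_nhds_iff.1 <|
    ((hg.comp (by fun_prop : Continuous fun w : ℝ => (w, w, (1 : ℝ)))).continuousAt
      (x := 1)).eventually_lt_const hM
  have hnρ' : ∀ᶠ n : ℕ in atTop, M * ((n : ℝ) * ρ n ^ m) < lam' - lam :=
    (hnρ.const_mul M).eventually (eventually_lt_nhds (by rw [mul_zero]; linarith))
  filter_upwards [hρ.eventually (eventually_lt_nhds hδ), hρ.eventually (eventually_lt_nhds one_pos),
    hρ.eventually (eventually_lt_nhds hη), hρ.eventually (eventually_lt_nhds hη'), hnρ']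
    with n hρδ hρ1 hρη hρη' hMρ xs hxs v
  have h := quadForm_kernelMatrix_ge (lam := lam') (M := M) hsum hpsd hρδ.le hρ1
    (fun w hw => (hgapη (lt_of_le_of_lt hw hρη)).le)
    (fun w hw => (hMη' (lt_of_le_of_lt hw hρη')).le) xs hxs v
  refine le_trans (mul_le_mul_of_nonneg_right ?_ (by positivity)) h
  linarith

theorem eigenvalue_lower_bound_for_A1_A3_kernels_general
    -- high-dimensional regime
    (β : ℝ) (hβ : 0 < β)
    (d : ℕ → ℕ)
    (S : ∀ n, Matrix (Fin (d n)) (Fin (d n)) ℝ)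
    -- the kernel satisfies Assumptions (A.1)-(A.3)
    (g : ℝ → ℝ → ℝ → ℝ) (gj : ℕ → ℝ → ℝ → ℝ)
    (hgcont : Continuous fun p : ℝ × ℝ × ℝ => g p.1 p.2.1 p.2.2)
    (hker : AssumptionA1 g gj ∧ AssumptionA2 g ∧ AssumptionA3 β gj) :
    -- conclusion, with m = ⌊2/β⌋:
    (0 < g 1 1 1 - ∑ i ∈ Finset.range (⌊2 / β⌋₊ + 1), gj i 1 1) ∧
    ∀ γ : ℝ, 0 < γ → ∀ ε : ℝ, 0 < ε → ∃ N : ℕ, ∀ n ≥ N,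
      ∀ xs : Fin n → (Fin (d n) → ℝ),
        -- the concentration event E_X for the sample
        (∀ i j : Fin n,
          |dotp (xs i) (xs j) / (S n).trace - (if i = j then (1:ℝ) else 0)| ≤
            (n : ℝ) ^ (-(β / 2)) * Real.log n ^ ((1 + ε) / 2)) →
        -- λ_min(K) ≥ g(1,1,1) − Σ_{i=0}^m g_i(1,1) − γ, as a quadratic-form bound
        ∀ v : Fin n → ℝ,
          (g 1 1 1 - (∑ i ∈ Finset.range (⌊2 / β⌋₊ + 1), gj i 1 1) - γ) * (∑ i, v i ^ 2) ≤
            dotProduct v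
              ((kernelMatrix (kermap g ((S n).trace)) xs).mulVec v) := by
  obtain ⟨⟨⟨δ, hδ, hsum⟩, hpsd⟩, -, hsmooth, J, hmJ, hJ⟩ := hker
  set m := ⌊2 / β⌋₊
  have hsum₁ : HasSum (fun k => gj k 1 1) (g 1 1 1) := by
    simpa using hsum 1 1 1 ⟨by linarith, by linarith⟩ ⟨by linarith, by linarith⟩
      (by rw [abs_one]; linarith)
  have hgap := sum_range_lt_of_hasSum hsum₁ (fun k => (hpsd k).diag_nonneg 1) hmJ hJ
  refine ⟨sub_pos.2 hgap, fun γ hγ ε hε => eventually_atTop.1 ?_⟩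
  have hgj : ∀ k < m + 1, ContinuousAt (fun p : ℝ × ℝ => gj k p.1 p.2) (1, 1) := fun k hk => by
    obtain ⟨U, hU, hk⟩ := hsmooth k (by omega)
    exact hk.continuousOn.continuousAt hU
  have hrate : 1 < β / 2 * ((m + 1 : ℕ) : ℝ) := by
    have := Nat.lt_floor_add_one (2 / β)
    rw [div_lt_iff₀ hβ] at this
    push_cast; linarith
  exact eventually_quadForm_kernelMatrix_ge hδ hsum hpsd hgcont
    (continuousAt_truncationGap hgcont hgj) (by linarith)
    (tendsto_rpow_neg_mul_log_rpow _ (by positivity))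
    (tendsto_natCast_mul_pow_rpow_neg_mul_log_rpow _ hrate) _

theorem eigenvalue_lower_bound_for_A1_A3_kernels
    -- high-dimensional regime
    (β c : ℝ) (hβ : 0 < β) (hc : 0 < c)
    (d : ℕ → ℕ)
    (S : ∀ n, Matrix (Fin (d n)) (Fin (d n)) ℝ)
    (hS : ∀ n, (S n).PosSemidef) (hSnorm : ∀ n, OpNormOne (S n))
    (hreg : Tendsto (fun n => (S n).trace / (n : ℝ) ^ β) atTop (𝓝 c))
    -- the kernel satisfies Assumptions (A.1)-(A.3)
    (g : ℝ → ℝ → ℝ → ℝ) (gj : ℕ → ℝ → ℝ → ℝ)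
    (hgcont : Continuous fun p : ℝ × ℝ × ℝ => g p.1 p.2.1 p.2.2)
    (hker : AssumptionA1 g gj ∧ AssumptionA2 g ∧ AssumptionA3 β gj) :
    -- conclusion, with m = ⌊2/β⌋:
    (0 < g 1 1 1 - ∑ i ∈ Finset.range (⌊2 / β⌋₊ + 1), gj i 1 1) ∧
    ∀ γ : ℝ, 0 < γ → ∀ ε : ℝ, 0 < ε → ∃ N : ℕ, ∀ n ≥ N,
      ∀ xs : Fin n → (Fin (d n) → ℝ),
        -- the concentration event E_X for the sample
        (∀ i j : Fin n,
          |dotp (xs i) (xs j) / (S n).trace - (if i = j then (1:ℝ) else 0)| ≤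
            (n : ℝ) ^ (-(β / 2)) * Real.log n ^ ((1 + ε) / 2)) →
        -- λ_min(K) ≥ g(1,1,1) − Σ_{i=0}^m g_i(1,1) − γ, as a quadratic-form bound
        ∀ v : Fin n → ℝ,
          (g 1 1 1 - (∑ i ∈ Finset.range (⌊2 / β⌋₊ + 1), gj i 1 1) - γ) * (∑ i, v i ^ 2) ≤
            dotProduct v
              ((kernelMatrix (kermap g ((S n).trace)) xs).mulVec v) :=
  eigenvalue_lower_bound_for_A1_A3_kernels_general β hβ d S g gj hgcont hker
end
end

section
/- Core of Lemma A.1 (divergence of tensor-product RKHS norms of non-constant sparse product functions). For each d ∈ ℕ let (λ_i^{(d)})_{i∈ℕ} be positive reals with Σ_i λ_i^{(d)} ≤ 1, and let (α_i^{(d)})_{i∈ℕ} and (β_i^{(d)})_{i∈ℕ} be square-summable real sequences with Σ_i (α_i^{(d)})² = 1 and Σ_i (β_i^{(d)})² = 1. Suppose there is a constant c₁ > 0, independent of d, such that for every d both Σ_i (α_i^{(d)} − β_i^{(d)})² ≥ c₁ and Σ_i (α_i^{(d)} + β_i^{(d)})² ≥ c₁. Then Σ_i (α_i^{(d)})²/λ_i^{(d)}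 ≥ 1 for every d, and the products (Σ_i (β_i^{(d)})²/λ_i^{(d)}) · (Σ_i (α_i^{(d)})²/λ_i^{(d)})^{d−1} tend to ∞ as d → ∞ (in the extended nonnegative reals, the sums being allowed to equal ∞). -/
open Filter
open scoped Topology ENNReal

private lemma aux_norm_ge_one (l a : ℕ → ℝ) (hlpos : ∀ i, 0 < l i)
    (hlsum : (∑' i, ENNReal.ofReal (l i)) ≤ 1)
    (hasum : HasSum (fun i => a i ^ 2) 1) :
    1 ≤ ∑' i, ENNReal.ofReal (a i ^ 2 / l i) := by
  have hl1 : ∀ i, l i ≤ 1 := fun i =>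
    ENNReal.ofReal_le_one.mp (le_trans (ENNReal.le_tsum i) hlsum)
  have h1 : (1 : ℝ≥0∞) = ∑' i, ENNReal.ofReal (a i ^ 2) := by
    rw [← ENNReal.ofReal_tsum_of_nonneg (fun i => sq_nonneg _) hasum.summable,
      hasum.tsum_eq, ENNReal.ofReal_one]
  rw [h1]
  refine ENNReal.tsum_le_tsum fun i => ENNReal.ofReal_le_ofReal ?_
  have := hlpos i
  calc a i ^ 2 = a i ^ 2 / 1 := by ring
    _ ≤ a i ^ 2 / l i := by
        apply div_le_div_of_nonneg_left (sq_nonneg _) (hlpos i) (hl1 i)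

set_option maxHeartbeats 1000000 in
private lemma aux_key (l a b : ℕ → ℝ) (hlpos : ∀ i, 0 < l i)
    (hlsum : (∑' i, ENNReal.ofReal (l i)) ≤ 1)
    (hasum : HasSum (fun i => a i ^ 2) 1) (hbsum : HasSum (fun i => b i ^ 2) 1)
    (c₁ : ℝ) (hc₁ : 0 < c₁)
    (hdiff : c₁ ≤ ∑' i, (a i - b i) ^ 2) (hsum2 : c₁ ≤ ∑' i, (a i + b i) ^ 2)
    (ε : ℝ) (hε0 : 0 < ε) (hεc : ε ≤ c₁ / 6) (hε6 : ε ≤ 1 / 6)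
    (hA : (∑' i, ENNReal.ofReal (a i ^ 2 / l i)) ≤ ENNReal.ofReal (1 + ε)) :
    ENNReal.ofReal (c₁ / (12 * ε)) ≤ ∑' i, ENNReal.ofReal (b i ^ 2 / l i) := by
  have hl1 : ∀ i, l i ≤ 1 := fun i =>
    ENNReal.ofReal_le_one.mp (le_trans (ENNReal.le_tsum i) hlsum)
  -- termwise split a²/l = a² + (a²/l - a²)
  have hterm : ∀ i, a i ^ 2 ≤ a i ^ 2 / l i := by
    intro i
    calc a i ^ 2 = a i ^ 2 / 1 := by ring
      _ ≤ a i ^ 2 / l i := div_le_div_of_nonneg_left (sq_nonneg _) (hlpos i) (hl1 i)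
  have hsplit : (∑' i, ENNReal.ofReal (a i ^ 2 / l i)) =
      (∑' i, ENNReal.ofReal (a i ^ 2)) + ∑' i, ENNReal.ofReal (a i ^ 2 / l i - a i ^ 2) := by
    rw [← ENNReal.tsum_add]
    refine tsum_congr fun i => ?_
    rw [← ENNReal.ofReal_add (sq_nonneg _) (by linarith [hterm i])]
    ring_nf
  have h1 : (∑' i, ENNReal.ofReal (a i ^ 2)) = 1 := by
    rw [← ENNReal.ofReal_tsum_of_nonneg (fun i => sq_nonneg _) hasum.summable,
      hasum.tsum_eq, ENNReal.ofReal_one]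
  have hrem : (∑' i, ENNReal.ofReal (a i ^ 2 / l i - a i ^ 2)) ≤ ENNReal.ofReal ε := by
    rw [hsplit, h1] at hA
    have : (1 : ℝ≥0∞) + ENNReal.ofReal ε = ENNReal.ofReal (1 + ε) := by
      rw [ENNReal.ofReal_add zero_le_one hε0.le, ENNReal.ofReal_one]
    rw [← this] at hA
    exact (ENNReal.add_le_add_iff_left ENNReal.one_ne_top).mp hA
  -- there is an index with l i₀ > 1/2
  obtain ⟨i₀, hi₀⟩ : ∃ i₀, 1 / 2 < l i₀ := by
    by_contra h
    push_neg at h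
    have hge : ∀ i, ENNReal.ofReal (a i ^ 2) ≤ ENNReal.ofReal (a i ^ 2 / l i - a i ^ 2) := by
      intro i
      apply ENNReal.ofReal_le_ofReal
      have h2 : a i ^ 2 / (1/2) ≤ a i ^ 2 / l i :=
        div_le_div_of_nonneg_left (sq_nonneg _) (hlpos i) (h i)
      nlinarith [sq_nonneg (a i)]
    have : (1 : ℝ≥0∞) ≤ ENNReal.ofReal ε := h1 ▸ (le_trans (ENNReal.tsum_le_tsum hge) hrem)
    rw [← ENNReal.ofReal_one, ENNReal.ofReal_le_ofReal_iff hε0.le] at this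
    linarith
  -- off-diagonal eigenvalues are small
  have hpair : ∀ i, i ≠ i₀ → l i + l i₀ ≤ 1 := by
    intro i hi
    have h2 : ENNReal.ofReal (l i) + ENNReal.ofReal (l i₀) ≤ 1 := by
      calc ENNReal.ofReal (l i) + ENNReal.ofReal (l i₀)
          = ∑ j ∈ ({i, i₀} : Finset ℕ), ENNReal.ofReal (l j) := by
            rw [Finset.sum_pair hi]
        _ ≤ ∑' j, ENNReal.ofReal (l j) := ENNReal.sum_le_tsum _
        _ ≤ 1 := hlsum
    rw [← ENNReal.ofReal_add (hlpos i).le (hlpos i₀).le, ← ENNReal.ofReal_one,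
      ENNReal.ofReal_le_ofReal_iff zero_le_one] at h2
    exact h2
  have hloff : ∀ i, i ≠ i₀ → l i ≤ 1 / 2 := fun i hi => by linarith [hpair i hi]
  -- mass of a off i₀ is at most ε
  set s : ℝ := ∑' i, if i = i₀ then 0 else a i ^ 2 with hs_def
  have hsumm_ite : ∀ (f : ℕ → ℝ), Summable (fun i => f i ^ 2) →
      Summable (fun i => if i = i₀ then 0 else f i ^ 2) := by
    intro f hf
    refine Summable.of_nonneg_of_le (fun i => ?_) (fun i => ?_) hf
    · split <;> [exact le_refl 0; exact sq_nonneg _]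
    · split <;> [exact sq_nonneg _; exact le_refl _]
  have hs_sum : Summable (fun i => if i = i₀ then 0 else a i ^ 2) := hsumm_ite a hasum.summable
  have hs_le : s ≤ ε := by
    have hEN : (∑' i, ENNReal.ofReal (if i = i₀ then 0 else a i ^ 2)) ≤ ENNReal.ofReal ε := by
      refine le_trans (ENNReal.tsum_le_tsum fun i => ?_) hrem
      by_cases hi : i = i₀
      · simp [hi]
      · simp only [hi, if_false]
        apply ENNReal.ofReal_le_ofReal
        have h2 : a i ^ 2 / (1/2) ≤ a i ^ 2 / l i :=
          div_le_div_of_nonneg_left (sq_nonneg _) (hlpos i) (hloff i hi)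
        nlinarith [sq_nonneg (a i)]
    rw [← ENNReal.ofReal_tsum_of_nonneg (fun i => by positivity) hs_sum,
      ENNReal.ofReal_le_ofReal_iff hε0.le] at hEN
    exact hEN
  have hs_nonneg : 0 ≤ s := tsum_nonneg fun i => by positivity
  have ha_split : (1 : ℝ) = a i₀ ^ 2 + s := by
    rw [hs_def, ← Summable.tsum_eq_add_tsum_ite hasum.summable i₀, hasum.tsum_eq]
  have ha_le1 : a i₀ ^ 2 ≤ 1 := le_hasSum hasum i₀ fun j _ => sq_nonneg _
  -- l i₀ is close to 1
  have hli₀ : 1 - 2 * ε ≤ l i₀ := by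
    have hterm0 : a i₀ ^ 2 / l i₀ - a i₀ ^ 2 ≤ ε := by
      have := le_trans (ENNReal.le_tsum i₀) hrem
      rwa [ENNReal.ofReal_le_ofReal_iff hε0.le] at this
    have hl0 := hlpos i₀
    have h4 : a i₀ ^ 2 / l i₀ ≤ ε + a i₀ ^ 2 := by linarith
    have h5 : a i₀ ^ 2 ≤ (ε + a i₀ ^ 2) * l i₀ := (div_le_iff₀ hl0).mp h4
    have h6 : a i₀ ^ 2 * (1 - l i₀) ≤ ε := by nlinarith [hl1 i₀]
    have h7 : (1 - ε) * (1 - l i₀) ≤ ε := by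
      refine le_trans (mul_le_mul_of_nonneg_right (by linarith) (by linarith [hl1 i₀])) h6
    nlinarith
  -- mass of b off i₀
  set m : ℝ := ∑' i, if i = i₀ then 0 else b i ^ 2 with hm_def
  have hm_sum : Summable (fun i => if i = i₀ then 0 else b i ^ 2) := hsumm_ite b hbsum.summable
  have hm_nonneg : 0 ≤ m := tsum_nonneg fun i => by positivity
  have hb_split : (1 : ℝ) = b i₀ ^ 2 + m := by
    rw [hm_def, ← Summable.tsum_eq_add_tsum_ite hbsum.summable i₀, hbsum.tsum_eq]
  -- m is bounded below
  have hm_lb : c₁ / 6 ≤ m := by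
    have hem : 0 ≤ ε + m := by linarith
    have habs : |a i₀ ^ 2 - b i₀ ^ 2| ≤ ε + m := by
      rw [abs_le]; constructor <;> nlinarith
    have h8 : (a i₀ ^ 2 - b i₀ ^ 2) ^ 2 ≤ (ε + m) ^ 2 := by
      rw [← sq_abs]
      exact pow_le_pow_left₀ (abs_nonneg _) habs 2
    have hmin : (a i₀ - b i₀) ^ 2 ≤ ε + m ∨ (a i₀ + b i₀) ^ 2 ≤ ε + m := by
      rcases le_total ((a i₀ - b i₀) ^ 2) ((a i₀ + b i₀) ^ 2) with h | h
      · left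
        rw [← pow_le_pow_iff_left₀ (sq_nonneg _) hem two_ne_zero]
        nlinarith [mul_le_mul_of_nonneg_left h (sq_nonneg (a i₀ - b i₀))]
      · right
        rw [← pow_le_pow_iff_left₀ (sq_nonneg _) hem two_ne_zero]
        nlinarith [mul_le_mul_of_nonneg_left h (sq_nonneg (a i₀ + b i₀))]
    have hoff_bound : ∀ g : ℕ → ℝ, (∀ i, 0 ≤ g i) → (∀ i, g i ≤ 2 * a i ^ 2 + 2 * b i ^ 2) →
        (∑' i, if i = i₀ then 0 else g i) ≤ 2 * s + 2 * m := by
      intro g hg0 hg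
      have h2 : (∑' i, if i = i₀ then 0 else g i) ≤
          ∑' i, ((2 : ℝ) * (if i = i₀ then 0 else a i ^ 2) +
            2 * (if i = i₀ then 0 else b i ^ 2)) := by
        refine Summable.tsum_le_tsum (fun i => ?_) ?_ ((hs_sum.mul_left 2).add (hm_sum.mul_left 2))
        · by_cases hi : i = i₀ <;> simp [hi, hg i]
        · refine Summable.of_nonneg_of_le (fun i => ?_) (fun i => ?_)
            ((hs_sum.mul_left 2).add (hm_sum.mul_left 2)) <;>
            by_cases hi : i = i₀ <;> simp [hi, hg0 i, hg i, sq_nonneg]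
      rw [Summable.tsum_add (hs_sum.mul_left 2) (hm_sum.mul_left 2), tsum_mul_left, tsum_mul_left] at h2
      exact h2
    have hdsum : Summable (fun i => (a i - b i) ^ 2) := by
      refine Summable.of_nonneg_of_le (fun i => sq_nonneg _) (fun i => ?_)
        ((hasum.summable.mul_left 2).add (hbsum.summable.mul_left 2))
      nlinarith [sq_nonneg (a i + b i)]
    have hssum : Summable (fun i => (a i + b i) ^ 2) := by
      refine Summable.of_nonneg_of_le (fun i => sq_nonneg _) (fun i => ?_)
        ((hasum.summable.mul_left 2).add (hbsum.summable.mul_left 2))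
      nlinarith [sq_nonneg (a i - b i)]
    rcases hmin with h | h
    · have hd := hdiff
      rw [Summable.tsum_eq_add_tsum_ite hdsum i₀] at hd
      have h4 := hoff_bound (fun i => (a i - b i) ^ 2) (fun i => sq_nonneg _)
        (fun i => by show (a i - b i) ^ 2 ≤ _; nlinarith [sq_nonneg (a i + b i)])
      linarith
    · have hd := hsum2
      rw [Summable.tsum_eq_add_tsum_ite hssum i₀] at hd
      have h4 := hoff_bound (fun i => (a i + b i) ^ 2) (fun i => sq_nonneg _)
        (fun i => by show (a i + b i) ^ 2 ≤ _; nlinarith [sq_nonneg (a i - b i)])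
      linarith
  -- now bound the b-norm from below
  have hloff2 : ∀ i, i ≠ i₀ → l i ≤ 2 * ε := by
    intro i hi
    linarith [hpair i hi]
  calc ENNReal.ofReal (c₁ / (12 * ε))
      ≤ ENNReal.ofReal (m / (2 * ε)) := by
        apply ENNReal.ofReal_le_ofReal
        rw [div_le_div_iff₀ (by positivity) (by positivity)]
        nlinarith
    _ = ∑' i, ENNReal.ofReal (if i = i₀ then 0 else b i ^ 2 / (2 * ε)) := by
        rw [← ENNReal.ofReal_tsum_of_nonneg (fun i => by positivity) ?_]
        · congr 1
          rw [hm_def, ← tsum_div_const]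
          refine tsum_congr fun i => ?_
          by_cases hi : i = i₀ <;> simp [hi]
        · refine Summable.of_nonneg_of_le (fun i => by positivity) (fun i => ?_)
            (hm_sum.div_const (2 * ε))
          by_cases hi : i = i₀ <;> simp [hi]
    _ ≤ ∑' i, ENNReal.ofReal (b i ^ 2 / l i) := by
        refine ENNReal.tsum_le_tsum fun i => ENNReal.ofReal_le_ofReal ?_
        by_cases hi : i = i₀
        · simp only [hi, if_pos rfl]
          positivity
        · simp only [hi, if_false]
          exact div_le_div_of_nonneg_left (sq_nonneg _) (hlpos i) (hloff2 i hi)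

/-- Core of Lemma A.1: divergence of tensor-product RKHS norms of non-constant sparse
product functions.  For each dimension `d`, `l d` are the Mercer eigenvalues of the
per-coordinate kernel (positive, with total mass at most 1), and `a d`, `b d` are the
eigenbasis coefficients of the constant function `1` and of the normalized factor `f₁`
(both of unit `ℓ²`-norm).  The hypotheses `hdiff` and `hsum` say that `f₁` stays
`L²`-bounded away from the constants `1` and `−1`, uniformly in `d`.  Then the squared
Hilbert norm `Σ_i (a d i)²/(l d i)` of the constant `1` is at least `1`, and the squared
Hilbert norms `(Σ_i (b d i)²/(l d i))·(Σ_i (a d i)²/(l d i))^{d−1}` of the product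
functions diverge (in `ℝ≥0∞`, the sums being allowed to be infinite). -/
theorem divergence_of_tensor_product_rkhs_norms
    (l a b : ℕ → ℕ → ℝ)
    (hlpos : ∀ d i, 0 < l d i)
    (hlsum : ∀ d, (∑' i, ENNReal.ofReal (l d i)) ≤ 1)
    (hasum : ∀ d, HasSum (fun i => (a d i) ^ 2) 1)
    (hbsum : ∀ d, HasSum (fun i => (b d i) ^ 2) 1)
    (c₁ : ℝ) (hc₁ : 0 < c₁)
    (hdiff : ∀ d, c₁ ≤ ∑' i, (a d i - b d i) ^ 2)
    (hsum : ∀ d, c₁ ≤ ∑' i, (a d i + b d i) ^ 2) :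
    (∀ d, 1 ≤ ∑' i, ENNReal.ofReal ((a d i) ^ 2 / l d i)) ∧
    Tendsto
      (fun d => (∑' i, ENNReal.ofReal ((b d i) ^ 2 / l d i)) *
        (∑' i, ENNReal.ofReal ((a d i) ^ 2 / l d i)) ^ (d - 1))
      atTop (𝓝 ⊤) := by
  have hA1 : ∀ d, 1 ≤ ∑' i, ENNReal.ofReal ((a d i) ^ 2 / l d i) :=
    fun d => aux_norm_ge_one (l d) (a d) (hlpos d) (hlsum d) (hasum d)
  have hB1 : ∀ d, 1 ≤ ∑' i, ENNReal.ofReal ((b d i) ^ 2 / l d i) :=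
    fun d => aux_norm_ge_one (l d) (b d) (hlpos d) (hlsum d) (hbsum d)
  refine ⟨hA1, ?_⟩
  rw [ENNReal.tendsto_nhds_top_iff_nat]
  intro n
  set ε : ℝ := min (c₁ / 6) (min (1 / 6) (c₁ / (12 * (n + 1)))) with hε_def
  have hε0 : 0 < ε := by
    refine lt_min (by positivity) (lt_min (by norm_num) (by positivity))
  have hεc : ε ≤ c₁ / 6 := min_le_left _ _
  have hε6 : ε ≤ 1 / 6 := le_trans (min_le_right _ _) (min_le_left _ _)
  have hεn : ε ≤ c₁ / (12 * (n + 1)) := le_trans (min_le_right _ _) (min_le_right _ _)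
  have hbig : (n : ℝ) + 1 ≤ c₁ / (12 * ε) := by
    rw [le_div_iff₀ (by positivity)]
    have h12 : (0:ℝ) < 12 * ((n:ℝ) + 1) := by positivity
    calc ((n:ℝ) + 1) * (12 * ε) ≤ ((n:ℝ) + 1) * (12 * (c₁ / (12 * (n + 1)))) := by
          gcongr
      _ = c₁ := by field_simp
  have h1ε : (1:ℝ) < 1 + ε := by linarith
  have hev : ∀ᶠ d : ℕ in atTop, (n : ℝ) < (1 + ε) ^ (d - 1) := by
    exact (tendsto_pow_atTop_atTop_of_one_lt h1ε |>.comp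
      (tendsto_sub_atTop_nat 1)).eventually (eventually_gt_atTop (n : ℝ))
  filter_upwards [hev] with d hd
  by_cases hAd : (∑' i, ENNReal.ofReal ((a d i) ^ 2 / l d i)) ≤ ENNReal.ofReal (1 + ε)
  · -- b-norm is big
    have hkey := aux_key (l d) (a d) (b d) (hlpos d) (hlsum d) (hasum d) (hbsum d)
      c₁ hc₁ (hdiff d) (hsum d) ε hε0 hεc hε6 hAd
    have hBn : (n : ℝ≥0∞) < ∑' i, ENNReal.ofReal ((b d i) ^ 2 / l d i) := by
      refine lt_of_lt_of_le ?_ hkey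
      have : (n : ℝ≥0∞) = ENNReal.ofReal (n : ℝ) := by
        rw [ENNReal.ofReal_natCast]
      rw [this]
      exact ENNReal.ofReal_lt_ofReal_iff_of_nonneg (Nat.cast_nonneg n) |>.mpr
        (by linarith)
    calc (n : ℝ≥0∞) < ∑' i, ENNReal.ofReal ((b d i) ^ 2 / l d i) := hBn
      _ = (∑' i, ENNReal.ofReal ((b d i) ^ 2 / l d i)) * 1 := (mul_one _).symm
      _ ≤ _ := by
          gcongr
          exact one_le_pow_of_one_le' (hA1 d) _
  · push_neg at hAd
    have hApow : ENNReal.ofReal ((1 + ε) ^ (d - 1)) ≤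
        (∑' i, ENNReal.ofReal ((a d i) ^ 2 / l d i)) ^ (d - 1) := by
      rw [ENNReal.ofReal_pow (by linarith)]
      exact pow_le_pow_left' hAd.le _
    calc (n : ℝ≥0∞) = ENNReal.ofReal (n : ℝ) := (ENNReal.ofReal_natCast n).symm
      _ < ENNReal.ofReal ((1 + ε) ^ (d - 1)) :=
          (ENNReal.ofReal_lt_ofReal_iff_of_nonneg (Nat.cast_nonneg n)).mpr hd
      _ ≤ (∑' i, ENNReal.ofReal ((a d i) ^ 2 / l d i)) ^ (d - 1) := hApow
      _ = 1 * (∑' i, ENNReal.ofReal ((a d i) ^ 2 / l d i)) ^ (d - 1) := (one_mul _).symm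
      _ ≤ _ := by gcongr; exact hB1 d
end
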